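/- arXiv:math/0405059 — 3 statements merged into one kernel-verified Lean document; each statement's English description precedes it below -/
import Mathlib

section
/- Let k ≥ 4 and n ≥ 1, let Ω ⊆ ℝⁿ be open, and let v : Ω → ℝ^{k+1} be a C² map with ∫_Ω (‖Δv‖² + |∇v|⁴) dx < ∞. Then there is a constant C = C(k) > 0, independent of n, Ω and v, such that ∫_{B(0,1/2)} [ ∫_Ω ( ‖Δv(x)‖/‖v(x) − a‖ + |∇v(x)|²/‖v(x) − a‖² )² dx ] da ≤ C ∫_Ω (‖Δv‖² + |∇v|⁴) dx, where the outer integral is over the ball B(0,1/2) ⊆ ℝ^{k+1} and the inner integrand is interpreted as +∞ where v(x) = a. In particular, there exists a₀ ∈ B(0,1/2) with ∫_Ω ( ‖Δv(x)‖/‖v(x) − a₀‖ + |∇v(x)|²/‖v(x) − a₀‖² )² dx ≤ C' ∫_Ω (‖Δv‖² + |∇v|⁴) dx for a constant C' = C'(k). -/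
open MeasureTheory
open scoped Classical

/-- The `i`-th partial derivative of a map `u : ℝⁿ → ℝᵐ` (as Euclidean spaces). -/
noncomputable def pd {n m : ℕ} (u : EuclideanSpace ℝ (Fin n) → EuclideanSpace ℝ (Fin m))
    (i : Fin n) (x : EuclideanSpace ℝ (Fin n)) : EuclideanSpace ℝ (Fin m) :=
  fderiv ℝ u x (EuclideanSpace.single i 1)

/-- The componentwise Laplacian `Δu = ∑ i, ∂ᵢ∂ᵢu`. -/
noncomputable def lap {n m : ℕ} (u : EuclideanSpace ℝ (Fin n) → EuclideanSpace ℝ (Fin m))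
    (x : EuclideanSpace ℝ (Fin n)) : EuclideanSpace ℝ (Fin m) :=
  ∑ i, pd (pd u i) i x

/-- The squared gradient `|∇u(x)|² = ∑ i, ‖∂ᵢu(x)‖²`. -/
noncomputable def gradSq {n m : ℕ} (u : EuclideanSpace ℝ (Fin n) → EuclideanSpace ℝ (Fin m))
    (x : EuclideanSpace ℝ (Fin n)) : ℝ :=
  ∑ i, ‖pd u i x‖ ^ 2

set_option maxHeartbeats 1000000

section helpers
open Metric Set Module
open scoped ENNReal

lemma meas_pd {n m : ℕ} (u : EuclideanSpace ℝ (Fin n) → EuclideanSpace ℝ (Fin m)) (i : Fin n) :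
    Measurable (pd u i) := by
  unfold pd
  apply measurable_fderiv_apply_const

lemma meas_lap {n m : ℕ} (u : EuclideanSpace ℝ (Fin n) → EuclideanSpace ℝ (Fin m)) :
    Measurable (lap u) := by
  unfold lap
  exact Finset.measurable_sum _ fun i _ => meas_pd _ _

lemma meas_gradSq {n m : ℕ} (u : EuclideanSpace ℝ (Fin n) → EuclideanSpace ℝ (Fin m)) :
    Measurable (gradSq u) := by
  unfold gradSq
  exact Finset.measurable_sum _ fun i _ => ((meas_pd u i).norm).pow_const 2

lemma kerFin (k : ℕ) (p : ℝ) (hp0 : 0 < p) (hpk : p < (k+1 : ℝ)) :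
    (∫⁻ a in Metric.ball (0:EuclideanSpace ℝ (Fin (k+1))) 1, ENNReal.ofReal (‖a‖ ^ (-p))) ≠ ⊤ := by
  classical
  set Ek := EuclideanSpace ℝ (Fin (k+1))
  have hdim : finrank ℝ Ek = k+1 := finrank_euclideanSpace_fin
  have hmeas : Measurable fun a : Ek => ‖a‖ ^ (-p) := by fun_prop
  set μ := volume.restrict (Metric.ball (0:Ek) 1) with hμ
  rw [lintegral_eq_lintegral_meas_le μ
      (Filter.Eventually.of_forall fun a => Real.rpow_nonneg (norm_nonneg a) _)
      hmeas.aemeasurable]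
  have hS : ∀ t : ℝ, 0 < t → {a : Ek | t ≤ ‖a‖ ^ (-p)} ⊆ closedBall 0 (t ^ (-p⁻¹)) := by
    intro t ht a ha
    simp only [mem_setOf_eq] at ha
    simp only [mem_closedBall, dist_zero_right]
    rcases eq_or_lt_of_le (norm_nonneg a) with h0 | h0
    · rw [← h0]; exact Real.rpow_nonneg ht.le _
    · have := Real.rpow_le_rpow_of_nonpos ht ha (neg_nonpos.2 (inv_nonneg.2 hp0.le))
      rwa [← Real.rpow_mul (norm_nonneg a), neg_mul_neg, mul_inv_cancel₀ hp0.ne',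
        Real.rpow_one] at this
  have hsplit : ∫⁻ t in Ioi (0:ℝ), μ {a : Ek | t ≤ ‖a‖ ^ (-p)} ≤
      (∫⁻ t in Ioc (0:ℝ) 1, μ {a : Ek | t ≤ ‖a‖ ^ (-p)}) +
      ∫⁻ t in Ioi (1:ℝ), μ {a : Ek | t ≤ ‖a‖ ^ (-p)} :=
    le_trans (lintegral_mono_set Ioi_subset_Ioc_union_Ioi) (lintegral_union_le _ _ _)
  refine ne_top_of_le_ne_top (ENNReal.add_ne_top.2 ⟨?_, ?_⟩) hsplit
  · have h1 : ∫⁻ t in Ioc (0:ℝ) 1, μ {a : Ek | t ≤ ‖a‖ ^ (-p)} ≤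
        ∫⁻ _t in Ioc (0:ℝ) 1, volume (Metric.ball (0:Ek) 1) := by
      refine lintegral_mono fun t => ?_
      calc μ {a : Ek | t ≤ ‖a‖ ^ (-p)} ≤ μ univ := measure_mono (subset_univ _)
        _ = volume (Metric.ball (0:Ek) 1) := by rw [hμ, Measure.restrict_apply_univ]
    refine ne_top_of_le_ne_top ?_ (h1.trans_eq (setLIntegral_const _ _))
    exact ENNReal.mul_ne_top measure_ball_lt_top.ne (by simp)
  · set q : ℝ := -p⁻¹ * (k+1) with hq
    have hq1 : q < -1 := by
      rw [hq, neg_mul, neg_lt_neg_iff, inv_mul_eq_div, lt_div_iff₀ hp0, one_mul]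
      exact hpk
    have h2 : ∀ t ∈ Ioi (1:ℝ), μ {a : Ek | t ≤ ‖a‖ ^ (-p)} ≤
        ENNReal.ofReal (t ^ q) * volume (ball (0:Ek) 1) := by
      intro t ht
      have ht0 : (0:ℝ) < t := lt_trans one_pos ht
      calc μ {a : Ek | t ≤ ‖a‖ ^ (-p)} ≤ volume (closedBall (0:Ek) (t ^ (-p⁻¹))) :=
            le_trans (Measure.restrict_le_self _) (measure_mono (hS t ht0))
        _ = ENNReal.ofReal ((t ^ (-p⁻¹)) ^ (finrank ℝ Ek)) * volume (ball (0:Ek) 1) :=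
            Measure.addHaar_closedBall _ _ (Real.rpow_nonneg ht0.le _)
        _ = ENNReal.ofReal (t ^ q) * volume (ball (0:Ek) 1) := by
            rw [← Real.rpow_natCast (t ^ (-p⁻¹)) (finrank ℝ Ek), ← Real.rpow_mul ht0.le, hdim]
            push_cast
            rw [hq]
    have h3 : ∫⁻ t in Ioi (1:ℝ), μ {a : Ek | t ≤ ‖a‖ ^ (-p)} ≤
        (∫⁻ t in Ioi (1:ℝ), ENNReal.ofReal (t ^ q)) * volume (ball (0:Ek) 1) := by
      rw [← lintegral_mul_const' _ _ measure_ball_lt_top.ne]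
      exact setLIntegral_mono' measurableSet_Ioi h2
    refine ne_top_of_le_ne_top ?_ h3
    refine ENNReal.mul_ne_top ?_ measure_ball_lt_top.ne
    exact ((integrableOn_Ioi_rpow_of_lt hq1 one_pos).setLIntegral_lt_top).ne

lemma kerBound (k : ℕ) (p : ℝ) (hp0 : 0 < p) (hpk : p < (k+1 : ℝ)) :
    ∃ K : ℝ≥0∞, K ≠ ⊤ ∧ ∀ w : EuclideanSpace ℝ (Fin (k+1)),
      (∫⁻ a in Metric.ball (0 : EuclideanSpace ℝ (Fin (k+1))) (1/2),
        ENNReal.ofReal (‖w - a‖ ^ (-p))) ≤ K := by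
  classical
  set Ek := EuclideanSpace ℝ (Fin (k+1))
  set J : ℝ≥0∞ := ∫⁻ a in Metric.ball (0:Ek) 1, ENNReal.ofReal (‖a‖ ^ (-p)) with hJdef
  refine ⟨J + volume (Metric.ball (0:Ek) (1/2)),
    ENNReal.add_ne_top.2 ⟨kerFin k p hp0 hpk, measure_ball_lt_top.ne⟩, fun w => ?_⟩
  have hpt : ∀ a : Ek, ENNReal.ofReal (‖w - a‖ ^ (-p)) ≤
      (Metric.ball w 1).indicator (fun a => ENNReal.ofReal (‖w - a‖ ^ (-p))) a + 1 := by
    intro a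
    by_cases ha : a ∈ Metric.ball w 1
    · rw [indicator_of_mem ha]; exact le_add_of_nonneg_right zero_le
    · rw [indicator_of_notMem ha]
      have h1 : (1:ℝ) ≤ ‖w - a‖ := by
        rw [mem_ball, dist_eq_norm] at ha
        rw [norm_sub_rev]; linarith [not_lt.mp ha]
      calc ENNReal.ofReal (‖w - a‖ ^ (-p)) ≤ ENNReal.ofReal 1 :=
            ENNReal.ofReal_le_ofReal
              (Real.rpow_le_one_of_one_le_of_nonpos h1 (neg_nonpos.2 hp0.le))
        _ ≤ _ := by simp
  calc (∫⁻ a in Metric.ball (0:Ek) (1/2), ENNReal.ofReal (‖w - a‖ ^ (-p)))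
      ≤ ∫⁻ a in Metric.ball (0:Ek) (1/2),
        ((Metric.ball w 1).indicator (fun a => ENNReal.ofReal (‖w - a‖ ^ (-p))) a + 1) :=
        lintegral_mono hpt
    _ = (∫⁻ a in Metric.ball (0:Ek) (1/2),
          (Metric.ball w 1).indicator (fun a => ENNReal.ofReal (‖w - a‖ ^ (-p))) a)
        + volume (Metric.ball (0:Ek) (1/2)) := by
        rw [lintegral_add_right _ measurable_const, lintegral_const,
          Measure.restrict_apply_univ, one_mul]
    _ ≤ J + volume (Metric.ball (0:Ek) (1/2)) := by
        gcongr
        calc (∫⁻ a in Metric.ball (0:Ek) (1/2),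
              (Metric.ball w 1).indicator (fun a => ENNReal.ofReal (‖w - a‖ ^ (-p))) a)
            ≤ ∫⁻ a, (Metric.ball w 1).indicator
                (fun a => ENNReal.ofReal (‖w - a‖ ^ (-p))) a :=
              lintegral_mono' (Measure.restrict_le_self) le_rfl
          _ = ∫⁻ a in Metric.ball w 1, ENNReal.ofReal (‖w - a‖ ^ (-p)) :=
              lintegral_indicator measurableSet_ball _
          _ = J := by
              have hmp : MeasurePreserving (fun a : Ek => w - a) volume volume :=
                MeasureTheory.Measure.measurePreserving_sub_left volume w
              have hemb : MeasurableEmbedding (fun a : Ek => w - a) :=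
                (MeasurableEquiv.subLeft w).measurableEmbedding
              have hpre : (fun a : Ek => w - a) ⁻¹' (Metric.ball 0 1) = Metric.ball w 1 := by
                ext a
                simp [mem_ball, dist_eq_norm, norm_sub_rev]
                rw [dist_comm, dist_eq_norm]
              rw [hJdef, ← hmp.setLIntegral_comp_preimage_emb hemb
                (fun b => ENNReal.ofReal (‖b‖ ^ (-p))) (Metric.ball 0 1), hpre]

lemma rpow_neg_eq_inv_pow {r : ℝ} (hr : 0 ≤ r) (n : ℕ) (hn : n ≠ 0) :
    r ^ (-(n:ℝ)) = (r ^ n)⁻¹ := by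
  rw [Real.rpow_neg hr, Real.rpow_natCast]

end helpers

open scoped ENNReal

open scoped ENNReal

/-- The Fubini-averaging step in the proof of the Extension Lemma (Lemma 2.1): for `k ≥ 4`
there are constants `C, C' > 0` depending only on `k` such that for every C² map
`v : Ω ⊆ ℝⁿ → ℝ^{k+1}` of finite energy `E = ∫_Ω (‖Δv‖² + |∇v|⁴)`,
`∫_{B(0,1/2)} ∫_Ω (‖Δv(x)‖/‖v(x)-a‖ + |∇v(x)|²/‖v(x)-a‖²)² dx da ≤ C E`
(the inner integrand being `+∞` where `v x = a`), and in particular there exists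
`a₀ ∈ B(0,1/2)` with `∫_Ω (‖Δv(x)‖/‖v(x)-a₀‖ + |∇v(x)|²/‖v(x)-a₀‖²)² dx ≤ C' E`. -/
theorem stmt6 (k : ℕ) (hk : 4 ≤ k) :
    ∃ C C' : ℝ, 0 < C ∧ 0 < C' ∧
    ∀ (n : ℕ), 1 ≤ n →
    ∀ Ω : Set (EuclideanSpace ℝ (Fin n)), IsOpen Ω →
    ∀ v : EuclideanSpace ℝ (Fin n) → EuclideanSpace ℝ (Fin (k + 1)),
      ContDiffOn ℝ 2 v Ω →
      IntegrableOn (fun x => ‖lap v x‖ ^ 2 + (gradSq v x) ^ 2) Ω →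
      (∫⁻ a in Metric.ball (0 : EuclideanSpace ℝ (Fin (k + 1))) (1 / 2),
          ∫⁻ x in Ω, (if v x = a then ⊤ else
            ENNReal.ofReal ((‖lap v x‖ / ‖v x - a‖ + gradSq v x / ‖v x - a‖ ^ 2) ^ 2))) ≤
        ENNReal.ofReal (C * ∫ x in Ω, (‖lap v x‖ ^ 2 + (gradSq v x) ^ 2)) ∧
      ∃ a₀ ∈ Metric.ball (0 : EuclideanSpace ℝ (Fin (k + 1))) (1 / 2),
        (∫⁻ x in Ω, (if v x = a₀ then ⊤ else
            ENNReal.ofReal ((‖lap v x‖ / ‖v x - a₀‖ + gradSq v x / ‖v x - a₀‖ ^ 2) ^ 2))) ≤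
          ENNReal.ofReal (C' * ∫ x in Ω, (‖lap v x‖ ^ 2 + (gradSq v x) ^ 2)) := by
  classical
  have hk2 : (2:ℝ) < (k:ℝ) + 1 := by
    have : (4:ℝ) ≤ (k:ℝ) := by exact_mod_cast hk
    linarith
  have hk4 : (4:ℝ) < (k:ℝ) + 1 := by
    have : (4:ℝ) ≤ (k:ℝ) := by exact_mod_cast hk
    linarith
  obtain ⟨K2, hK2t, hK2⟩ := kerBound k 2 two_pos hk2
  obtain ⟨K4, hK4t, hK4⟩ := kerBound k 4 four_pos hk4
  set Ek := EuclideanSpace ℝ (Fin (k+1)) with hEk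
  set B : Set Ek := Metric.ball (0:Ek) (1/2) with hB
  set T : ENNReal := 2 * (K2 + K4) with hT
  have hTt : T ≠ ⊤ := by
    rw [hT]
    exact ENNReal.mul_ne_top (by simp) (ENNReal.add_ne_top.2 ⟨hK2t, hK4t⟩)
  set c : ℝ := T.toReal with hc
  have hc0 : 0 ≤ c := ENNReal.toReal_nonneg
  set Vr : ℝ := (volume B).toReal with hVr
  have hVr0 : 0 < Vr := by
    rw [hVr]
    exact ENNReal.toReal_pos (Metric.measure_ball_pos volume _ (by norm_num : (0:ℝ) < 1/2)).ne'
      measure_ball_lt_top.ne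
  refine ⟨c + 1, 2 * (c + 1) / Vr, by positivity, by positivity, ?_⟩
  intro n hn Ω hΩ v hv hInt
  set ν := volume.restrict Ω with hν
  set I0 : ℝ := ∫ x in Ω, (‖lap v x‖ ^ 2 + (gradSq v x) ^ 2) with hI0def
  have hI0nn : 0 ≤ I0 := integral_nonneg fun x => by positivity
  -- measurable modification of v
  have hvae : AEMeasurable v ν := (hv.continuousOn).aemeasurable hΩ.measurableSet
  set v₀ := hvae.mk v with hv₀def
  have hv₀m : Measurable v₀ := hvae.measurable_mk
  have hveq : ∀ᵐ x ∂ν, v x = v₀ x := hvae.ae_eq_mk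
  set F₀ : Ek → EuclideanSpace ℝ (Fin n) → ℝ≥0∞ := fun a x => if v₀ x = a then ⊤ else
    ENNReal.ofReal ((‖lap v x‖ / ‖v₀ x - a‖ + gradSq v x / ‖v₀ x - a‖ ^ 2) ^ 2) with hF₀
  have hcong : ∀ a, (∫⁻ x in Ω, (if v x = a then ⊤ else
      ENNReal.ofReal ((‖lap v x‖ / ‖v x - a‖ + gradSq v x / ‖v x - a‖ ^ 2) ^ 2))) =
      ∫⁻ x, F₀ a x ∂ν := by
    intro a
    refine lintegral_congr_ae (hveq.mono fun x hx => ?_)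
    rw [hF₀]
    simp only
    rw [hx]
  have hF₀meas : Measurable (Function.uncurry F₀) := by
    have hnorm : Measurable fun p : Ek × EuclideanSpace ℝ (Fin n) => ‖v₀ p.2 - p.1‖ :=
      ((hv₀m.comp measurable_snd).sub measurable_fst).norm
    have : Function.uncurry F₀ = fun p : Ek × EuclideanSpace ℝ (Fin n) =>
        if v₀ p.2 = p.1 then ⊤ else
          ENNReal.ofReal ((‖lap v p.2‖ / ‖v₀ p.2 - p.1‖ +
            gradSq v p.2 / ‖v₀ p.2 - p.1‖ ^ 2) ^ 2) := rfl
    rw [this]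
    refine Measurable.ite (measurableSet_eq_fun (hv₀m.comp measurable_snd) measurable_fst)
      measurable_const ?_
    exact ((((meas_lap v).norm.comp measurable_snd).div hnorm).add
      (((meas_gradSq v).comp measurable_snd).div (hnorm.pow_const 2))).pow_const 2
      |>.ennreal_ofReal
  -- inner bound
  have hinner : ∀ x, (∫⁻ a in B, F₀ a x) ≤
      ENNReal.ofReal (2 * ‖lap v x‖ ^ 2) * K2 + ENNReal.ofReal (2 * gradSq v x ^ 2) * K4 := by
    intro x
    have hae : ∀ᵐ a ∂(volume.restrict B), a ≠ v₀ x := by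
      have hset : {a : Ek | ¬ a ≠ v₀ x} = {v₀ x} := by
        ext a
        simp [not_not]
      have h1 : (volume.restrict B) {a : Ek | ¬ a ≠ v₀ x} = 0 := by
        rw [hset]
        exact le_antisymm (le_trans (Measure.restrict_le_self _) (by simp)) zero_le
      exact ae_iff.2 h1
    have hb : ∀ a : Ek, a ≠ v₀ x → F₀ a x ≤
        ENNReal.ofReal (2 * ‖lap v x‖ ^ 2) * ENNReal.ofReal (‖v₀ x - a‖ ^ (-(2:ℝ))) +
        ENNReal.ofReal (2 * gradSq v x ^ 2) * ENNReal.ofReal (‖v₀ x - a‖ ^ (-(4:ℝ))) := by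
      intro a ha
      have hr : 0 < ‖v₀ x - a‖ := by
        rw [norm_pos_iff]
        exact sub_ne_zero_of_ne (Ne.symm ha)
      rw [hF₀]
      simp only
      rw [if_neg fun e => ha e.symm]
      rw [show (-(2:ℝ)) = -((2:ℕ):ℝ) by norm_num,
        show (-(4:ℝ)) = -((4:ℕ):ℝ) by norm_num,
        rpow_neg_eq_inv_pow (norm_nonneg _) 2 (by norm_num),
        rpow_neg_eq_inv_pow (norm_nonneg _) 4 (by norm_num)]
      rw [← ENNReal.ofReal_mul (by positivity), ← ENNReal.ofReal_mul (by positivity),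
        ← ENNReal.ofReal_add (by positivity) (by positivity)]
      apply ENNReal.ofReal_le_ofReal
      set G := ‖lap v x‖
      set H := gradSq v x
      set r := ‖v₀ x - a‖
      have hrw : 2 * G ^ 2 * (r ^ 2)⁻¹ + 2 * H ^ 2 * (r ^ 4)⁻¹ =
          2 * (G / r) ^ 2 + 2 * (H / r ^ 2) ^ 2 := by
        field_simp
      rw [hrw]
      nlinarith [sq_nonneg (G / r - H / r ^ 2)]
    have hmeas2 : Measurable fun a : Ek => ENNReal.ofReal (‖v₀ x - a‖ ^ (-(2:ℝ))) := by
      fun_prop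
    have hmeas4 : Measurable fun a : Ek => ENNReal.ofReal (‖v₀ x - a‖ ^ (-(4:ℝ))) := by
      fun_prop
    calc (∫⁻ a in B, F₀ a x)
        ≤ ∫⁻ a in B, (ENNReal.ofReal (2 * ‖lap v x‖ ^ 2) *
            ENNReal.ofReal (‖v₀ x - a‖ ^ (-(2:ℝ))) +
          ENNReal.ofReal (2 * gradSq v x ^ 2) * ENNReal.ofReal (‖v₀ x - a‖ ^ (-(4:ℝ)))) :=
          lintegral_mono_ae (hae.mono fun a ha => hb a ha)
      _ = ENNReal.ofReal (2 * ‖lap v x‖ ^ 2) * (∫⁻ a in B, ENNReal.ofReal (‖v₀ x - a‖ ^ (-(2:ℝ)))) +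
          ENNReal.ofReal (2 * gradSq v x ^ 2) * (∫⁻ a in B, ENNReal.ofReal (‖v₀ x - a‖ ^ (-(4:ℝ)))) := by
          rw [lintegral_add_left (hmeas2.const_mul _), lintegral_const_mul _ hmeas2,
            lintegral_const_mul _ hmeas4]
      _ ≤ ENNReal.ofReal (2 * ‖lap v x‖ ^ 2) * K2 + ENNReal.ofReal (2 * gradSq v x ^ 2) * K4 :=
          add_le_add (mul_le_mul_right (hK2 (v₀ x)) _) (mul_le_mul_right (hK4 (v₀ x)) _)
  -- the integral identity
  have hIeq : (∫⁻ x, ENNReal.ofReal (2 * (‖lap v x‖ ^ 2 + gradSq v x ^ 2)) ∂ν) =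
      ENNReal.ofReal (2 * I0) := by
    rw [← ofReal_integral_eq_lintegral_ofReal (hInt.const_mul 2)
      (Filter.Eventually.of_forall fun x => by positivity)]
    rw [hI0def, integral_const_mul]
  -- main estimate
  have hmain : (∫⁻ a in B, ∫⁻ x in Ω, (if v x = a then ⊤ else
      ENNReal.ofReal ((‖lap v x‖ / ‖v x - a‖ + gradSq v x / ‖v x - a‖ ^ 2) ^ 2))) ≤
      ENNReal.ofReal ((c + 1) * I0) := by
    have hg2 : Measurable fun x => ENNReal.ofReal (2 * ‖lap v x‖ ^ 2) :=
      (((meas_lap v).norm.pow_const 2).const_mul 2).ennreal_ofReal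
    have hh2 : Measurable fun x => ENNReal.ofReal (2 * gradSq v x ^ 2) :=
      (((meas_gradSq v).pow_const 2).const_mul 2).ennreal_ofReal
    calc (∫⁻ a in B, ∫⁻ x in Ω, (if v x = a then ⊤ else
        ENNReal.ofReal ((‖lap v x‖ / ‖v x - a‖ + gradSq v x / ‖v x - a‖ ^ 2) ^ 2)))
        = ∫⁻ a in B, ∫⁻ x, F₀ a x ∂ν := lintegral_congr fun a => hcong a
      _ = ∫⁻ x, (∫⁻ a in B, F₀ a x) ∂ν := lintegral_lintegral_swap hF₀meas.aemeasurable
      _ ≤ ∫⁻ x, (ENNReal.ofReal (2 * ‖lap v x‖ ^ 2) * K2 +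
            ENNReal.ofReal (2 * gradSq v x ^ 2) * K4) ∂ν := lintegral_mono hinner
      _ = (∫⁻ x, ENNReal.ofReal (2 * ‖lap v x‖ ^ 2) ∂ν) * K2 +
          (∫⁻ x, ENNReal.ofReal (2 * gradSq v x ^ 2) ∂ν) * K4 := by
          rw [lintegral_add_left (hg2.mul_const _), lintegral_mul_const _ hg2,
            lintegral_mul_const _ hh2]
      _ ≤ (∫⁻ x, ENNReal.ofReal (2 * (‖lap v x‖ ^ 2 + gradSq v x ^ 2)) ∂ν) * K2 +
          (∫⁻ x, ENNReal.ofReal (2 * (‖lap v x‖ ^ 2 + gradSq v x ^ 2)) ∂ν) * K4 := by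
          refine add_le_add (mul_le_mul_left (lintegral_mono fun x => ?_) K2)
            (mul_le_mul_left (lintegral_mono fun x => ?_) K4)
          · exact ENNReal.ofReal_le_ofReal (by nlinarith [sq_nonneg (gradSq v x)])
          · exact ENNReal.ofReal_le_ofReal (by nlinarith [sq_nonneg (‖lap v x‖)])
      _ = ENNReal.ofReal (2 * I0) * (K2 + K4) := by rw [hIeq]; ring
      _ = ENNReal.ofReal I0 * T := by
          rw [ENNReal.ofReal_mul (by norm_num : (0:ℝ) ≤ 2), hT, ENNReal.ofReal_ofNat]
          ring
      _ = ENNReal.ofReal I0 * ENNReal.ofReal c := by rw [hc, ENNReal.ofReal_toReal hTt]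
      _ = ENNReal.ofReal (c * I0) := by rw [← ENNReal.ofReal_mul' hc0, mul_comm]
      _ ≤ ENNReal.ofReal ((c + 1) * I0) :=
          ENNReal.ofReal_le_ofReal (mul_le_mul_of_nonneg_right (by linarith) hI0nn)
  refine ⟨hmain, ?_⟩
  -- existence of a good center
  have hInnm : Measurable fun a => ∫⁻ x, F₀ a x ∂ν :=
    hF₀meas.lintegral_prod_right'
  have hBne : (volume.restrict B) ≠ 0 := by
    rw [← Measure.measure_univ_ne_zero, Measure.restrict_apply_univ]
    exact (Metric.measure_ball_pos volume _ (by norm_num : (0:ℝ) < 1/2)).ne'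
  have hNeBot : (ae (volume.restrict B)).NeBot := ae_neBot.2 hBne
  by_cases hE : I0 = 0
  · -- degenerate case: total integral is zero
    have hD0 : (∫⁻ a in B, ∫⁻ x, F₀ a x ∂ν) = 0 := by
      refine le_antisymm ?_ zero_le
      calc (∫⁻ a in B, ∫⁻ x, F₀ a x ∂ν)
          = ∫⁻ a in B, ∫⁻ x in Ω, (if v x = a then ⊤ else
            ENNReal.ofReal ((‖lap v x‖ / ‖v x - a‖ + gradSq v x / ‖v x - a‖ ^ 2) ^ 2)) :=
            (lintegral_congr fun a => hcong a).symm
        _ ≤ ENNReal.ofReal ((c + 1) * I0) := hmain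
        _ = 0 := by rw [hE, mul_zero, ENNReal.ofReal_zero]
    have hz := (lintegral_eq_zero_iff hInnm).1 hD0
    obtain ⟨a₀, ha₀B, ha₀⟩ := ((ae_restrict_mem measurableSet_ball).and hz).exists
    refine ⟨a₀, ha₀B, ?_⟩
    rw [hcong a₀]
    simp only [Pi.zero_apply] at ha₀
    rw [ha₀]
    exact zero_le
  · have hI0pos : 0 < I0 := lt_of_le_of_ne hI0nn (Ne.symm hE)
    by_contra hcon
    push_neg at hcon
    have hlow : ∀ a ∈ B, ENNReal.ofReal ((2 * (c + 1) / Vr) * I0) < ∫⁻ x, F₀ a x ∂ν := by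
      intro a ha
      have := hcon a ha
      rwa [hcong a] at this
    have hlower : ENNReal.ofReal ((2 * (c + 1) / Vr) * I0) * volume B ≤
        ∫⁻ a in B, ∫⁻ x, F₀ a x ∂ν := by
      calc ENNReal.ofReal ((2 * (c + 1) / Vr) * I0) * volume B
          = ∫⁻ _a in B, ENNReal.ofReal ((2 * (c + 1) / Vr) * I0) :=
            (setLIntegral_const _ _).symm
        _ ≤ ∫⁻ a in B, ∫⁻ x, F₀ a x ∂ν :=
            lintegral_mono_ae ((ae_restrict_mem measurableSet_ball).mono
              fun a ha => (hlow a ha).le)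
    have hupper : (∫⁻ a in B, ∫⁻ x, F₀ a x ∂ν) ≤ ENNReal.ofReal ((c + 1) * I0) := by
      calc (∫⁻ a in B, ∫⁻ x, F₀ a x ∂ν)
          = ∫⁻ a in B, ∫⁻ x in Ω, (if v x = a then ⊤ else
            ENNReal.ofReal ((‖lap v x‖ / ‖v x - a‖ + gradSq v x / ‖v x - a‖ ^ 2) ^ 2)) :=
            (lintegral_congr fun a => hcong a).symm
        _ ≤ ENNReal.ofReal ((c + 1) * I0) := hmain
    have hvolB : volume B = ENNReal.ofReal Vr := by
      rw [hVr, ENNReal.ofReal_toReal measure_ball_lt_top.ne]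
    have hcomb : ENNReal.ofReal (2 * ((c + 1) * I0)) ≤ ENNReal.ofReal ((c + 1) * I0) := by
      calc ENNReal.ofReal (2 * ((c + 1) * I0))
          = ENNReal.ofReal ((2 * (c + 1) / Vr) * I0 * Vr) := by
            congr 1
            field_simp
        _ = ENNReal.ofReal ((2 * (c + 1) / Vr) * I0) * ENNReal.ofReal Vr := by
            rw [← ENNReal.ofReal_mul (by positivity)]
        _ = ENNReal.ofReal ((2 * (c + 1) / Vr) * I0) * volume B := by rw [hvolB]
        _ ≤ ∫⁻ a in B, ∫⁻ x, F₀ a x ∂ν := hlower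
        _ ≤ ENNReal.ofReal ((c + 1) * I0) := hupper
    rw [ENNReal.ofReal_le_ofReal_iff (by positivity)] at hcomb
    nlinarith
end

section
/- Let n ≥ 2 and define Φ : ℝⁿ∖{0} → ℝⁿ by Φ(x) = x/‖x‖. Then for every x ≠ 0: ΔΦ(x) = (1 − n) x/‖x‖³, |∇Φ(x)|² = (n − 1)/‖x‖², and hence ‖ΔΦ(x)‖ = |∇Φ(x)|², so that ‖ΔΦ(x)‖² = |∇Φ(x)|⁴ pointwise. -/
/-- The radial projection `Φ(x) = x/‖x‖` (valued `0` at the origin). -/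
noncomputable def Phi (n : ℕ) (x : EuclideanSpace ℝ (Fin n)) : EuclideanSpace ℝ (Fin n) :=
  ‖x‖⁻¹ • x

open scoped RealInnerProductSpace

noncomputable abbrev EE (n : ℕ) := EuclideanSpace ℝ (Fin n)

lemma hasFDerivAt_norm' {n : ℕ} (x : EE n) (hx : x ≠ 0) :
    HasFDerivAt (fun y : EE n => ‖y‖) (‖x‖⁻¹ • innerSL ℝ x) x := by
  have hx' : ‖x‖ ≠ 0 := norm_ne_zero_iff.2 hx
  have h1 : HasFDerivAt (fun y : EE n => ‖y‖ ^ 2) (2 • innerSL ℝ x) x :=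
    (hasStrictFDerivAt_norm_sq x).hasFDerivAt
  have h2 : HasDerivAt Real.sqrt (1 / (2 * Real.sqrt (‖x‖ ^ 2))) (‖x‖ ^ 2) :=
    Real.hasDerivAt_sqrt (by positivity)
  have h3 := h2.comp_hasFDerivAt x h1
  have hfun : (Real.sqrt ∘ fun y : EE n => ‖y‖ ^ 2) = fun y : EE n => ‖y‖ := by
    funext y; simp [Function.comp, Real.sqrt_sq (norm_nonneg y)]
  rw [hfun] at h3
  refine h3.congr_fderiv ?_
  rw [Real.sqrt_sq (norm_nonneg x)]
  ext v
  simp only [ContinuousLinearMap.smul_apply, smul_eq_mul, nsmul_eq_mul, Nat.cast_ofNat]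
  field_simp

lemma hasFDerivAt_invNorm {n : ℕ} (x : EE n) (hx : x ≠ 0) :
    HasFDerivAt (fun y : EE n => ‖y‖⁻¹) ((-(‖x‖ ^ 3)⁻¹) • innerSL ℝ x) x := by
  have hx' : ‖x‖ ≠ 0 := norm_ne_zero_iff.2 hx
  have h := ((hasDerivAt_id ‖x‖).inv hx').comp_hasFDerivAt x (hasFDerivAt_norm' x hx)
  refine h.congr_fderiv ?_
  ext v
  simp only [ContinuousLinearMap.smul_apply, smul_eq_mul, smul_smul, id]
  field_simp

lemma hasFDerivAt_invNormCube {n : ℕ} (x : EE n) (hx : x ≠ 0) :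
    HasFDerivAt (fun y : EE n => (‖y‖ ^ 3)⁻¹) ((-3 * (‖x‖ ^ 5)⁻¹) • innerSL ℝ x) x := by
  have hx' : ‖x‖ ≠ 0 := norm_ne_zero_iff.2 hx
  have h := (((hasDerivAt_pow 3 ‖x‖).inv (pow_ne_zero 3 hx')).comp_hasFDerivAt x
    (hasFDerivAt_norm' x hx))
  refine h.congr_fderiv ?_
  ext v
  simp only [ContinuousLinearMap.smul_apply, smul_eq_mul, smul_smul]
  field_simp
  ring

lemma hasFDerivAt_Phi {n : ℕ} (x : EE n) (hx : x ≠ 0) :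
    HasFDerivAt (Phi n)
      (‖x‖⁻¹ • ContinuousLinearMap.id ℝ (EE n)
        + ((-(‖x‖ ^ 3)⁻¹) • innerSL ℝ x).smulRight x) x := by
  have h := (hasFDerivAt_invNorm x hx).smul (hasFDerivAt_id x)
  exact h

lemma pd_Phi {n : ℕ} (i : Fin n) (y : EE n) (hy : y ≠ 0) :
    pd (Phi n) i y
      = ‖y‖⁻¹ • (EuclideanSpace.single i 1) + (-(‖y‖ ^ 3)⁻¹ * y i) • y := by
  rw [pd, (hasFDerivAt_Phi y hy).fderiv]
  simp [EuclideanSpace.inner_single_right, real_inner_comm]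

lemma pd2_Phi {n : ℕ} (i : Fin n) (x : EE n) (hx : x ≠ 0) :
    pd (pd (Phi n) i) i x
      = (-2 * (‖x‖ ^ 3)⁻¹ * x i) • (EuclideanSpace.single i 1)
        + (3 * (‖x‖ ^ 5)⁻¹ * (x i) ^ 2 - (‖x‖ ^ 3)⁻¹) • x := by
  have hx' : ‖x‖ ≠ 0 := norm_ne_zero_iff.2 hx
  have hproj : HasFDerivAt (fun y : EE n => y i) (EuclideanSpace.proj (𝕜 := ℝ) i) x :=
    (EuclideanSpace.proj (𝕜 := ℝ) i).hasFDerivAt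
  have h1 := (hasFDerivAt_invNorm x hx).smul_const (EuclideanSpace.single i (1:ℝ))
  have hs := ((hasFDerivAt_invNormCube x hx).neg.mul hproj)
  have h2 := hs.smul (hasFDerivAt_id x)
  have hP := h1.add h2
  simp only [id_eq] at hP
  have hP' : HasFDerivAt (fun y : EE n => ‖y‖⁻¹ • (EuclideanSpace.single i (1:ℝ)) + (-(‖y‖ ^ 3)⁻¹ * y i) • y) _ x := hP
  have heq : pd (Phi n) i =ᶠ[nhds x]
      (fun y => ‖y‖⁻¹ • (EuclideanSpace.single i (1:ℝ)) + (-(‖y‖ ^ 3)⁻¹ * y i) • y) := by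
    filter_upwards [eventually_ne_nhds hx] with y hy
    exact pd_Phi i y hy
  rw [pd, heq.fderiv_eq, hP'.fderiv]
  simp only [ContinuousLinearMap.add_apply, ContinuousLinearMap.smulRight_apply,
    ContinuousLinearMap.smul_apply, ContinuousLinearMap.coe_smul', Pi.smul_apply,
    ContinuousLinearMap.coe_id', id_eq, ContinuousLinearMap.neg_apply,
    PiLp.proj_apply, EuclideanSpace.inner_single_right, smul_eq_mul,
    EuclideanSpace.single_apply, if_pos rfl, RCLike.inner_apply, conj_trivial,
    Pi.neg_apply, innerSL_apply_apply, if_true, Pi.mul_apply]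
  match_scalars <;> field_simp <;> ring

lemma sum_smul_single' {n : ℕ} (x : EE n) :
    ∑ i, x i • EuclideanSpace.single i (1:ℝ) = x := by
  ext j
  rw [show ((∑ i, x i • EuclideanSpace.single i (1:ℝ)) j)
      = ∑ i, (x i • EuclideanSpace.single i (1:ℝ)) j from by rw [WithLp.ofLp_sum]; exact Finset.sum_apply j Finset.univ _]
  simp [EuclideanSpace.single_apply]

lemma sum_sq' {n : ℕ} (x : EE n) : ∑ i, (x i) ^ 2 = ‖x‖ ^ 2 := by
  rw [← real_inner_self_eq_norm_sq]
  simp only [PiLp.inner_apply, RCLike.inner_apply, conj_trivial, sq]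

lemma lap_Phi {n : ℕ} (x : EE n) (hx : x ≠ 0) :
    lap (Phi n) x = ((1 - (n : ℝ)) / ‖x‖ ^ 3) • x := by
  have hx' : ‖x‖ ≠ 0 := norm_ne_zero_iff.2 hx
  rw [lap]
  have h1 : (∑ i, pd (pd (Phi n) i) i x)
      = ∑ i, ((-2 * (‖x‖ ^ 3)⁻¹) • (x i • EuclideanSpace.single i (1:ℝ))
        + ((3 * (‖x‖ ^ 5)⁻¹ * (x i) ^ 2 - (‖x‖ ^ 3)⁻¹) • x)) := by
    refine Finset.sum_congr rfl fun i _ => ?_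
    rw [pd2_Phi i x hx, smul_smul]
  rw [h1, Finset.sum_add_distrib, ← Finset.smul_sum, sum_smul_single', ← Finset.sum_smul]
  have h2 : (∑ i, (3 * (‖x‖ ^ 5)⁻¹ * (x i) ^ 2 - (‖x‖ ^ 3)⁻¹))
      = 3 * (‖x‖ ^ 5)⁻¹ * ‖x‖ ^ 2 - n * (‖x‖ ^ 3)⁻¹ := by
    rw [Finset.sum_sub_distrib, ← Finset.mul_sum, sum_sq']
    simp [Finset.sum_const, mul_comm]
  rw [h2]
  match_scalars
  field_simp
  ring

lemma gradSq_Phi {n : ℕ} (x : EE n) (hx : x ≠ 0) :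
    gradSq (Phi n) x = ((n : ℝ) - 1) / ‖x‖ ^ 2 := by
  have hx' : ‖x‖ ≠ 0 := norm_ne_zero_iff.2 hx
  rw [gradSq]
  have hterm : ∀ i, ‖pd (Phi n) i x‖ ^ 2 = (‖x‖ ^ 2)⁻¹ - (‖x‖ ^ 4)⁻¹ * (x i) ^ 2 := by
    intro i
    rw [pd_Phi i x hx, ← real_inner_self_eq_norm_sq]
    rw [real_inner_add_add_self]
    simp only [real_inner_smul_left, real_inner_smul_right,
      EuclideanSpace.inner_single_right, EuclideanSpace.inner_single_left,
      EuclideanSpace.single_apply, if_pos rfl, real_inner_self_eq_norm_sq,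
      RCLike.inner_apply, conj_trivial]
    simp only [norm_smul, Real.norm_eq_abs, mul_pow, sq_abs, EuclideanSpace.norm_single,
      norm_one, norm_inv, mul_one, one_pow, abs_norm]
    field_simp
    ring
  rw [Finset.sum_congr rfl fun i _ => hterm i, Finset.sum_sub_distrib, ← Finset.mul_sum,
    sum_sq', Finset.sum_const, Finset.card_univ]
  simp only [Fintype.card_fin, nsmul_eq_mul]
  field_simp

/-- Explicit computations for the equator map `Φ(x) = x/‖x‖` on `ℝⁿ ∖ {0}`, `n ≥ 2`:
`ΔΦ(x) = (1-n) x/‖x‖³`, `|∇Φ(x)|² = (n-1)/‖x‖²`, hence `‖ΔΦ(x)‖ = |∇Φ(x)|²` and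
`‖ΔΦ(x)‖² = |∇Φ(x)|⁴`. -/
theorem stmt7 (n : ℕ) (hn : 2 ≤ n) :
    ∀ x : EuclideanSpace ℝ (Fin n), x ≠ 0 →
      lap (Phi n) x = ((1 - (n : ℝ)) / ‖x‖ ^ 3) • x ∧
      gradSq (Phi n) x = ((n : ℝ) - 1) / ‖x‖ ^ 2 ∧
      ‖lap (Phi n) x‖ = gradSq (Phi n) x ∧
      ‖lap (Phi n) x‖ ^ 2 = (gradSq (Phi n) x) ^ 2 := by
  intro x hx
  have hx' : ‖x‖ ≠ 0 := norm_ne_zero_iff.2 hx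
  have hxpos : (0:ℝ) < ‖x‖ := norm_pos_iff.2 hx
  have h1 := lap_Phi x hx
  have h2 := gradSq_Phi x hx
  have hn1 : (1:ℝ) - n ≤ 0 := by
    have : (2:ℝ) ≤ n := by exact_mod_cast hn
    linarith
  have h3 : ‖lap (Phi n) x‖ = gradSq (Phi n) x := by
    rw [h1, h2, norm_smul, Real.norm_eq_abs, abs_div, abs_of_nonpos hn1,
      abs_of_nonneg (by positivity : (0:ℝ) ≤ ‖x‖ ^ 3), neg_sub]
    field_simp
  exact ⟨h1, h2, h3, by rw [h3]⟩
end

section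
/- Let u ∈ ℝ⁵ with ‖u‖ = 1 and let p₁, p₂, p₃, p₄, p₅ ∈ ℝ⁵. Define V ∈ ℝ⁵ by V₁ = det(u, p₂, p₃, p₄, p₅), V₂ = det(u, p₁, p₃, p₄, p₅), V₃ = det(u, p₁, p₂, p₄, p₅), V₄ = det(u, p₁, p₂, p₃, p₅), V₅ = det(u, p₁, p₂, p₃, p₄), where each det is the determinant of the 5×5 matrix with the listed columns. Then ‖V‖ ≤ (1/16) ( ∑_{i=1}^5 ‖p_i‖² )². -/
set_option maxRecDepth 8000

open Matrix

private theorem amgm4' (a b c d T : ℝ) (ha : 0 ≤ a) (hb : 0 ≤ b) (hc : 0 ≤ c) (hd : 0 ≤ d)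
    (h : a + b + c + d ≤ T) : a * b * c * d ≤ (T / 4) ^ 4 := by
  have h1 : a * b ≤ ((a + b) / 2) ^ 2 := by nlinarith [sq_nonneg (a - b)]
  have h2 : c * d ≤ ((c + d) / 2) ^ 2 := by nlinarith [sq_nonneg (c - d)]
  have h3 : ((a + b) / 2) * ((c + d) / 2) ≤ ((a + b + c + d) / 4) ^ 2 := by
    nlinarith [sq_nonneg (a + b - c - d)]
  have h4 : a * b * (c * d) ≤ (((a + b) / 2) * ((c + d) / 2)) ^ 2 := by
    have := mul_le_mul h1 h2 (mul_nonneg hc hd) (sq_nonneg _)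
    calc a * b * (c * d) ≤ ((a+b)/2)^2 * ((c+d)/2)^2 := this
    _ = (((a + b) / 2) * ((c + d) / 2)) ^ 2 := by ring
  have h5 : (((a + b) / 2) * ((c + d) / 2)) ^ 2 ≤ (((a + b + c + d) / 4) ^ 2) ^ 2 := by
    have hnn : 0 ≤ ((a + b) / 2) * ((c + d) / 2) := by positivity
    exact pow_le_pow_left₀ hnn h3 2
  have h6 : (((a + b + c + d) / 4) ^ 2) ^ 2 ≤ (T / 4) ^ 4 := by
    have hle : (a + b + c + d) / 4 ≤ T / 4 := by linarith
    have h0 : 0 ≤ (a + b + c + d) / 4 := by positivity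
    calc (((a + b + c + d) / 4) ^ 2) ^ 2 = ((a + b + c + d) / 4) ^ 4 := by ring
    _ ≤ (T / 4) ^ 4 := pow_le_pow_left₀ h0 hle 4
  calc a * b * c * d = a * b * (c * d) := by ring
  _ ≤ _ := le_trans h4 (le_trans h5 h6)

private theorem erase_bound' (lam : Fin 5 → ℝ) (hl : ∀ j, 0 ≤ lam j) (T : ℝ)
    (hT : ∑ j, lam j = T) (i : Fin 5) :
    ∏ j ∈ Finset.univ.erase i, lam j ≤ (T / 4) ^ 4 := by
  have hsum : lam 0 + lam 1 + lam 2 + lam 3 + lam 4 = T := by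
    rw [← hT, Fin.sum_univ_five]
  have key : ∀ s : Finset (Fin 5), ∀ a b c d : Fin 5,
      s = {a, b, c, d} → a ∉ ({b,c,d} : Finset (Fin 5)) → b ∉ ({c,d} : Finset (Fin 5)) →
      c ∉ ({d} : Finset (Fin 5)) →
      lam a + lam b + lam c + lam d ≤ T → ∏ j ∈ s, lam j ≤ (T / 4) ^ 4 := by
    intro s a b c d hs hab hbc hcd hsum4
    rw [hs, Finset.prod_insert hab, Finset.prod_insert hbc, Finset.prod_insert hcd,
      Finset.prod_singleton, ← mul_assoc, ← mul_assoc]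
    exact amgm4' _ _ _ _ T (hl a) (hl b) (hl c) (hl d) hsum4
  fin_cases i
  · exact key _ 1 2 3 4 (by decide) (by decide) (by decide) (by decide)
      (by have := hl 0; linarith)
  · exact key _ 0 2 3 4 (by decide) (by decide) (by decide) (by decide)
      (by have := hl 1; linarith)
  · exact key _ 0 1 3 4 (by decide) (by decide) (by decide) (by decide)
      (by have := hl 2; linarith)
  · exact key _ 0 1 2 4 (by decide) (by decide) (by decide) (by decide)
      (by have := hl 3; linarith)
  · exact key _ 0 1 2 3 (by decide) (by decide) (by decide) (by decide)
      (by have := hl 4; linarith)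

private theorem mulVec_dot' (A : Matrix (Fin 5) (Fin 5) ℝ) (u w : Fin 5 → ℝ) :
    (A *ᵥ u) ⬝ᵥ w = u ⬝ᵥ (Aᵀ *ᵥ w) := by
  rw [dotProduct_comm, dotProduct_mulVec, ← mulVec_transpose, dotProduct_comm]

private theorem adj_unitary' (U : Matrix (Fin 5) (Fin 5) ℝ) (h2 : star U * U = 1) :
    adjugate U = U.det • star U := by
  calc adjugate U = (star U * U) * adjugate U := by rw [h2, one_mul]
  _ = star U * (U * adjugate U) := by rw [mul_assoc]
  _ = star U * (U.det • 1) := by rw [mul_adjugate]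
  _ = U.det • star U := by rw [mul_smul_comm, mul_one]

private theorem quad_bound' (M : Matrix (Fin 5) (Fin 5) ℝ) (hM : M.PosSemidef) (u : Fin 5 → ℝ)
    (hu : u ⬝ᵥ u = 1) : u ⬝ᵥ (adjugate M *ᵥ u) ≤ (M.trace / 4) ^ 4 := by
  have hH : M.IsHermitian := hM.1
  set U : Matrix (Fin 5) (Fin 5) ℝ := (hH.eigenvectorUnitary : Matrix (Fin 5) (Fin 5) ℝ) with hUdef
  set lam : Fin 5 → ℝ := hH.eigenvalues with hlam
  have hU1 : U * star U = 1 := mem_unitaryGroup_iff.mp hH.eigenvectorUnitary.2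
  have hU2 : star U * U = 1 := mem_unitaryGroup_iff'.mp hH.eigenvectorUnitary.2
  have hstar : star U = Uᵀ := by
    rw [Matrix.star_eq_conjTranspose, Matrix.conjTranspose_eq_transpose_of_trivial]
  have hstarT : (star U)ᵀ = U := by rw [hstar, transpose_transpose]
  have hD : (diagonal ((RCLike.ofReal : ℝ → ℝ) ∘ lam)) = diagonal lam := by
    norm_num [RCLike.ofReal]
  have hspec : M = U * diagonal lam * star U := by
    have := hH.spectral_theorem
    rwa [hD] at this
  have hadjU : adjugate U = U.det • star U := adj_unitary' U hU2
  have hadjUs : adjugate (star U) = (star U).det • U := by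
    have := adj_unitary' (star U) (by rw [star_star, hU1])
    rwa [star_star] at this
  have hdet : (star U).det * U.det = 1 := by
    have := congrArg det hU2
    rwa [det_mul, det_one] at this
  have hadjM : adjugate M = U * adjugate (diagonal lam) * star U := by
    rw [hspec, adjugate_mul_distrib, adjugate_mul_distrib, hadjUs, hadjU]
    rw [Matrix.smul_mul, Matrix.mul_smul, Matrix.mul_smul, smul_smul, hdet, one_smul,
      ← mul_assoc]
  have htr : M.trace = ∑ j, lam j := by
    rw [hspec, trace_mul_cycle, hU2, one_mul, trace_diagonal]
  have hl : ∀ j, 0 ≤ lam j := hM.eigenvalues_nonneg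
  set y : Fin 5 → ℝ := star U *ᵥ u with hy
  have hmd : ∀ (A : Matrix (Fin 5) (Fin 5) ℝ) (v w : Fin 5 → ℝ),
      v ⬝ᵥ (A *ᵥ w) = (Aᵀ *ᵥ v) ⬝ᵥ w := by
    intro A v w
    rw [mulVec_dot', transpose_transpose]
  have hform : u ⬝ᵥ (adjugate M *ᵥ u)
      = ∑ i, (∏ j ∈ Finset.univ.erase i, lam j) * (y i * y i) := by
    rw [hadjM, ← mulVec_mulVec, ← mulVec_mulVec, hmd, ← hstar, ← hy, adjugate_diagonal]
    simp only [dotProduct, mulVec_diagonal]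
    exact Finset.sum_congr rfl fun i _ => by ring
  have hysum : ∑ i, y i * y i = 1 := by
    have h2 : y ⬝ᵥ y = u ⬝ᵥ ((U * star U) *ᵥ u) := by
      rw [hy, mulVec_dot', hstarT, mulVec_mulVec]
    have h3 : ∑ i, y i * y i = y ⬝ᵥ y := rfl
    rw [h3, h2, hU1, one_mulVec, hu]
  rw [hform]
  calc ∑ i, (∏ j ∈ Finset.univ.erase i, lam j) * (y i * y i)
      ≤ ∑ i, (M.trace / 4) ^ 4 * (y i * y i) := by
        apply Finset.sum_le_sum
        intro i _
        exact mul_le_mul_of_nonneg_right (erase_bound' lam hl _ htr.symm i) (mul_self_nonneg _)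
    _ = (M.trace / 4) ^ 4 := by rw [← Finset.mul_sum, hysum, mul_one]

private def sperm (f : Fin 5 → Fin 5) (g : Fin 5 → Fin 5)
    (h1 : Function.LeftInverse g f) (h2 : Function.RightInverse g f) : Equiv.Perm (Fin 5) :=
  ⟨f, g, h1, h2⟩

/-- The determinant of the 5×5 matrix with columns `v₁, v₂, v₃, v₄, v₅ ∈ ℝ⁵`. -/
noncomputable def det5 (v₁ v₂ v₃ v₄ v₅ : EuclideanSpace ℝ (Fin 5)) : ℝ :=
  Matrix.det (Matrix.of fun i j => ![v₁, v₂, v₃, v₄, v₅] j i)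

/-- The algebraic inequality behind (4.5): for a unit vector `u ∈ ℝ⁵` and vectors
`p₁, …, p₅ ∈ ℝ⁵`, the vector `V` of the five determinants obtained by replacing each `pᵢ`
in turn by `u` satisfies `‖V‖ ≤ (1/16) (∑ᵢ ‖pᵢ‖²)²`. -/
theorem stmt9 (u p₁ p₂ p₃ p₄ p₅ : EuclideanSpace ℝ (Fin 5)) (hu : ‖u‖ = 1) :
    ‖(EuclideanSpace.equiv (Fin 5) ℝ).symm
        ![det5 u p₂ p₃ p₄ p₅,
          det5 u p₁ p₃ p₄ p₅,
          det5 u p₁ p₂ p₄ p₅,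
          det5 u p₁ p₂ p₃ p₅,
          det5 u p₁ p₂ p₃ p₄]‖ ≤
      (1 / 16) * (‖p₁‖ ^ 2 + ‖p₂‖ ^ 2 + ‖p₃‖ ^ 2 + ‖p₄‖ ^ 2 + ‖p₅‖ ^ 2) ^ 2 := by
  classical
  set S : ℝ := ‖p₁‖ ^ 2 + ‖p₂‖ ^ 2 + ‖p₃‖ ^ 2 + ‖p₄‖ ^ 2 + ‖p₅‖ ^ 2 with hSdef
  set P : Matrix (Fin 5) (Fin 5) ℝ := Matrix.of fun r c => ![p₁,p₂,p₃,p₄,p₅] c r with hP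
  set u' : Fin 5 → ℝ := fun i => u i with hu'def
  -- norms squared as sums
  have hnorm : ∀ p : EuclideanSpace ℝ (Fin 5), ‖p‖ ^ 2 = ∑ i, p i ^ 2 := by
    intro p
    rw [EuclideanSpace.norm_eq, Real.sq_sqrt (by positivity)]
    congr 1; ext i; rw [Real.norm_eq_abs, sq_abs]
  have hu1 : u' ⬝ᵥ u' = 1 := by
    have h1 : ‖u‖ ^ 2 = 1 := by rw [hu]; norm_num
    rw [hnorm] at h1
    simpa [dotProduct, pow_two] using h1
  -- the five squared determinants
  have key : ∀ (i : Fin 5) (σ : Equiv.Perm (Fin 5)) (v₁ v₂ v₃ v₄ v₅ : EuclideanSpace ℝ (Fin 5)),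
      ((Matrix.of fun r c => (![v₁,v₂,v₃,v₄,v₅] : Fin 5 → EuclideanSpace ℝ (Fin 5)) c r)
        = (P.updateCol i u').submatrix id σ) →
      (det5 v₁ v₂ v₃ v₄ v₅) ^ 2 = ((P.updateCol i u').det) ^ 2 := by
    intro i σ v₁ v₂ v₃ v₄ v₅ hmat
    have h1 : det5 v₁ v₂ v₃ v₄ v₅ = Equiv.Perm.sign σ • (P.updateCol i u').det := by
      rw [det5, hmat, det_permute']
      simp [Units.smul_def]
    rw [h1]
    rcases Int.units_eq_one_or (Equiv.Perm.sign σ) with h | h <;> simp [h]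
  have k0 : (det5 u p₂ p₃ p₄ p₅) ^ 2 = ((P.updateCol 0 u').det) ^ 2 := by
    apply key 0 (sperm (fun c => ![0,1,2,3,4] c) (fun c => ![0,1,2,3,4] c)
      (by decide) (by decide))
    ext r c
    fin_cases c <;> simp [hP, sperm, Matrix.updateCol_apply, Matrix.submatrix_apply, hu'def]
  have k1 : (det5 u p₁ p₃ p₄ p₅) ^ 2 = ((P.updateCol 1 u').det) ^ 2 := by
    apply key 1 (sperm (fun c => ![1,0,2,3,4] c) (fun c => ![1,0,2,3,4] c)
      (by decide) (by decide))
    ext r c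
    fin_cases c <;> simp [hP, sperm, Matrix.updateCol_apply, Matrix.submatrix_apply, hu'def]
  have k2 : (det5 u p₁ p₂ p₄ p₅) ^ 2 = ((P.updateCol 2 u').det) ^ 2 := by
    apply key 2 (sperm (fun c => ![2,0,1,3,4] c) (fun c => ![1,2,0,3,4] c)
      (by decide) (by decide))
    ext r c
    fin_cases c <;> simp [hP, sperm, Matrix.updateCol_apply, Matrix.submatrix_apply, hu'def]
  have k3 : (det5 u p₁ p₂ p₃ p₅) ^ 2 = ((P.updateCol 3 u').det) ^ 2 := by
    apply key 3 (sperm (fun c => ![3,0,1,2,4] c) (fun c => ![1,2,3,0,4] c)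
      (by decide) (by decide))
    ext r c
    fin_cases c <;> simp [hP, sperm, Matrix.updateCol_apply, Matrix.submatrix_apply, hu'def]
  have k4 : (det5 u p₁ p₂ p₃ p₄) ^ 2 = ((P.updateCol 4 u').det) ^ 2 := by
    apply key 4 (sperm (fun c => ![4,0,1,2,3] c) (fun c => ![1,2,3,4,0] c)
      (by decide) (by decide))
    ext r c
    fin_cases c <;> simp [hP, sperm, Matrix.updateCol_apply, Matrix.submatrix_apply, hu'def]
  -- sum of squares equals the quadratic form
  set M : Matrix (Fin 5) (Fin 5) ℝ := P * Pᵀ with hM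
  have hMpsd : M.PosSemidef := by
    have := posSemidef_self_mul_conjTranspose P
    rwa [Matrix.conjTranspose_eq_transpose_of_trivial] at this
  have hsum_eq : ∑ i, ((P.updateCol i u').det) ^ 2 = u' ⬝ᵥ (adjugate M *ᵥ u') := by
    have hc : ∀ i, (P.updateCol i u').det = cramer P u' i := by
      intro i; rw [cramer_apply]
    have h1 : ∑ i, ((P.updateCol i u').det) ^ 2 = (cramer P u') ⬝ᵥ (cramer P u') := by
      simp only [dotProduct, hc, pow_two]
    rw [h1, cramer_eq_adjugate_mulVec, mulVec_dot', adjugate_transpose, mulVec_mulVec,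
      ← adjugate_mul_distrib, ← hM]
  -- trace of M
  have h3 : ∀ p : EuclideanSpace ℝ (Fin 5), ∑ r, p r * p r = ‖p‖ ^ 2 := by
    intro p; rw [hnorm]; exact Finset.sum_congr rfl fun i _ => (pow_two _).symm
  have htrace : M.trace = S := by
    have h1 : M.trace = ∑ r, ∑ c, P r c * P r c := by
      rw [hM]
      simp [Matrix.trace, Matrix.diag, Matrix.mul_apply, Matrix.transpose_apply]
    rw [h1, Finset.sum_comm]
    calc ∑ c, ∑ r, P r c * P r c
        = ∑ c : Fin 5, ‖(![p₁,p₂,p₃,p₄,p₅] c : EuclideanSpace ℝ (Fin 5))‖ ^ 2 :=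
          Finset.sum_congr rfl fun c _ => h3 _
      _ = S := by rw [Fin.sum_univ_five]; simp [hSdef]
  -- the norm of the vector of determinants
  have hnormV : ‖(EuclideanSpace.equiv (Fin 5) ℝ).symm
        ![det5 u p₂ p₃ p₄ p₅, det5 u p₁ p₃ p₄ p₅, det5 u p₁ p₂ p₄ p₅,
          det5 u p₁ p₂ p₃ p₅, det5 u p₁ p₂ p₃ p₄]‖
      = Real.sqrt ((det5 u p₂ p₃ p₄ p₅)^2 + (det5 u p₁ p₃ p₄ p₅)^2 + (det5 u p₁ p₂ p₄ p₅)^2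
        + (det5 u p₁ p₂ p₃ p₅)^2 + (det5 u p₁ p₂ p₃ p₄)^2) := by
    rw [EuclideanSpace.norm_eq]
    congr 1
    rw [Fin.sum_univ_five]
    simp [Real.norm_eq_abs, sq_abs]
  rw [hnormV]
  have hbound : (det5 u p₂ p₃ p₄ p₅)^2 + (det5 u p₁ p₃ p₄ p₅)^2 + (det5 u p₁ p₂ p₄ p₅)^2
      + (det5 u p₁ p₂ p₃ p₅)^2 + (det5 u p₁ p₂ p₃ p₄)^2 ≤ (S / 4) ^ 4 := by
    rw [k0, k1, k2, k3, k4]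
    have h1 : ((P.updateCol 0 u').det) ^ 2 + ((P.updateCol 1 u').det) ^ 2
        + ((P.updateCol 2 u').det) ^ 2 + ((P.updateCol 3 u').det) ^ 2
        + ((P.updateCol 4 u').det) ^ 2 = ∑ i, ((P.updateCol i u').det) ^ 2 := by
      rw [Fin.sum_univ_five]
    rw [h1, hsum_eq, ← htrace]
    exact quad_bound' M hMpsd u' hu1
  have hS0 : 0 ≤ S := by positivity
  calc Real.sqrt ((det5 u p₂ p₃ p₄ p₅)^2 + (det5 u p₁ p₃ p₄ p₅)^2 + (det5 u p₁ p₂ p₄ p₅)^2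
        + (det5 u p₁ p₂ p₃ p₅)^2 + (det5 u p₁ p₂ p₃ p₄)^2)
      ≤ Real.sqrt ((S / 4) ^ 4) := Real.sqrt_le_sqrt hbound
    _ = (S / 4) ^ 2 := by
        rw [show (S / 4) ^ 4 = ((S / 4) ^ 2) ^ 2 by ring, Real.sqrt_sq (by positivity)]
    _ = (1 / 16) * S ^ 2 := by ring
end
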